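/- Extend the passthrough clause of the C_i ordinal notation system as follows: in testing standardness of C_i(a,b), also allow passthrough through occurrences of C_j(e,f) with j = i and e < a (i.e., allow clause (ii) whenever (j,e) < (i,a) lexicographically, rather than only when j < i). Then a term is standard under the extended definition if and only if it is standard under the original definition; consequently, under the identification of C_i(a,b) with C(Ω·i + a, b), the C_i system permits exactly the same terms below Ω, with the same comparison, as the Degrees of Reflection with Passthrough system using pairing for the notation O above Ω. -/

import Mathlib

/-- Terms of the `C_i` ordinal notation system: the constant `0` and, for each natural
number `i`, a binary function symbol `C_i`.  Under the identification of `C_i(a,b)` with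
`C(Ω·i + a, b)`, these are also the terms below `Ω` of the Degrees of Reflection with
Passthrough system using pairing for the notation `O` above `Ω`. -/
inductive CT where
  | zero : CT
  | C (i : ℕ) (a b : CT) : CT

/-- The comparison relation: `0 < C_i(a,b)`, and `C_i(a,b) < C_j(c,d)` iff
`C_i(a,b) ≤ d`, or (`b < C_j(c,d)` and `(i,a) < (j,c)` lexicographically).  This is
also the comparison of the corresponding Degrees of Reflection with Passthrough
terms below `Ω`. -/
def clt : CT → CT → Prop
  | _, .zero => False
  | .zero, .C _ _ _ => True
  | .C i a b, .C j c d =>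
      (clt (CT.C i a b) d ∨ CT.C i a b = d) ∨
      (clt b (CT.C j c d) ∧ (i < j ∨ (i = j ∧ clt a c)))
termination_by t u => sizeOf t + sizeOf u
decreasing_by all_goals (simp only [CT.C.sizeOf_spec]; omega)

/-- `t ≤ u` for terms. -/
def cle (t u : CT) : Prop := clt t u ∨ t = u

/-- Directions into the two arguments of `C_i`. -/
inductive Dir where
  | l : Dir
  | r : Dir

/-- The subterm occurrence of a term at a position (a path of directions), if any. -/
def occAt : CT → List Dir → Option CT
  | t, [] => some t
  | .zero, _ :: _ => none
  | .C _ a _, Dir.l :: p => occAt a p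
  | .C _ _ b, Dir.r :: p => occAt b p

/-- `a` is built from below from `< C_i(a,b)` with passthrough: every occurrence
(position `p`) in `a` of a subterm `x` with `x > a` either
(i) lies inside an occurrence of a subterm `z` of `a` with `z < C_i(a,b)`, or
(ii) is a proper subterm of an occurrence of a term `C_j(e,f)` with `j < i` (or, in the
    extended version `ext = true`, with `j < i`, or `j = i` and `e < a`, i.e.
    `(j,e) < (i,a)` lexicographically) which does not lie inside a subterm of that
    occurrence of `C_j(e,f)` that is `< C_j(e,f)`. -/
def BFB (ext : Bool) (i : ℕ) (a b : CT) : Prop :=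
  ∀ (p : List Dir) (x : CT), occAt a p = some x → clt a x →
    (∃ (q : List Dir) (z : CT), q <+: p ∧ occAt a q = some z ∧ clt z (CT.C i a b)) ∨
    (∃ (q : List Dir) (j : ℕ) (e f : CT), q <+: p ∧ q ≠ p ∧
        occAt a q = some (CT.C j e f) ∧
        (j < i ∨ (ext = true ∧ j = i ∧ clt e a)) ∧
        ∀ (r : List Dir) (z : CT), q <+: r → r <+: p → occAt a r = some z →
          ¬ clt z (CT.C j e f))

/-- Standardness of terms of the `C_i` system (original version for `ext = false`,
extended-passthrough version for `ext = true`). -/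
def Std (ext : Bool) : CT → Prop
  | .zero => True
  | .C i a b => Std ext a ∧ Std ext b ∧
      (b = CT.zero ∨ ∃ (j : ℕ) (c d : CT), b = CT.C j c d ∧
        (i < j ∨ (i = j ∧ cle a c))) ∧
      BFB ext i a b

/-!
If an occurrence of `x > a` passes through `C_i(e,f)` with `e < a`, it cannot sit in `f`
(as `f < C_i(e,f)`), so it sits in `e`, and `x > a > e`. Standardness of `C_i(e,f)` applied
to `x` inside `e` rules out clause (i), since `C_i(e,f)` is passed through, and clause (ii)
yields a deeper passthrough `C_k(g,h)` that is still one in `a`, with `k < i`, or `k = i` and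
`g < e < a`. Descending along the path of `x` this ends in a passthrough with `k < i`.
-/

theorem clt_trans : ∀ (a b c : CT), clt a b → clt b c → clt a c
  | _, _, CT.zero, _, h2 => absurd h2 (by simp [clt])
  | CT.zero, _, CT.C _ _ _, _, _ => by simp [clt]
  | CT.C α a1 a2, b, CT.C γ c1 c2, h1, h2 => by
    match b, h1, h2 with
    | CT.zero, h1, _ => exact absurd h1 (by simp [clt])
    | CT.C β b1 b2, h1, h2 =>
      rw [clt] at h2
      rcases h2 with (hbc2 | hbeq) | ⟨hb2c, hlex2⟩
      · rw [clt]
        exact Or.inl (Or.inl (clt_trans _ _ _ h1 hbc2))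
      · rw [clt]; exact Or.inl (Or.inl (hbeq ▸ h1))
      · rw [clt] at h1
        rcases h1 with (hab2 | haeq) | ⟨ha2b, hlex1⟩
        · exact clt_trans _ _ _ hab2 hb2c
        · exact haeq ▸ hb2c
        · rw [clt]
          refine Or.inr ⟨clt_trans _ _ _ ha2b (by rw [clt]; exact Or.inr ⟨hb2c, hlex2⟩), ?_⟩
          rcases hlex1 with h | ⟨he1, h1'⟩
          · rcases hlex2 with h' | ⟨he2, _⟩
            · exact Or.inl (h.trans h')
            · exact Or.inl (he2 ▸ h)
          · rcases hlex2 with h' | ⟨he2, h2'⟩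
            · exact Or.inl (he1 ▸ h')
            · exact Or.inr ⟨he1.trans he2, clt_trans _ _ _ h1' h2'⟩
termination_by a b c => sizeOf a + sizeOf b + sizeOf c
decreasing_by all_goals (simp only [CT.C.sizeOf_spec]; omega)

theorem clt_C_right (i : ℕ) (a b : CT) : clt b (CT.C i a b) := by
  cases b with
  | zero => simp [clt]
  | C j c d => rw [clt]; exact Or.inl (Or.inr rfl)

theorem occAt_append {t y : CT} {p : List Dir} (h : occAt t p = some y) (r : List Dir) :
    occAt t (p ++ r) = occAt y r := by
  induction p generalizing t with
  | nil => simp only [occAt, Option.some.injEq] at h; subst h; rfl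
  | cons d p ih =>
    cases t with
    | zero => simp [occAt] at h
    | C i a b => cases d <;> exact ih h

theorem Std.of_occAt {ext : Bool} {t z : CT} {p : List Dir} (hs : Std ext t)
    (h : occAt t p = some z) : Std ext z := by
  induction p generalizing t with
  | nil => simp only [occAt, Option.some.injEq] at h; exact h ▸ hs
  | cons d p ih =>
    cases t with
    | zero => simp [occAt] at h
    | C i a b => cases d with
      | l => exact ih hs.1 h
      | r => exact ih hs.2.1 h

/-- Clause (ii) of `BFB`, without its condition on `(j, e)`. -/
def PassesThrough (a : CT) (p q : List Dir) (j : ℕ) (e f : CT) : Prop :=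
  q <+: p ∧ q ≠ p ∧ occAt a q = some (CT.C j e f) ∧
    ∀ r z, q <+: r → r <+: p → occAt a r = some z → ¬ clt z (CT.C j e f)

namespace PassesThrough

variable {a e f : CT} {p q : List Dir} {j : ℕ}

theorem exists_eq_append_left (h : PassesThrough a p q j e f) :
    ∃ p₁, p = q ++ Dir.l :: p₁ := by
  obtain ⟨⟨s, rfl⟩, hne, hq, hbelow⟩ := h
  match s with
  | [] => exact absurd (List.append_nil q).symm hne
  | Dir.l :: p₁ => exact ⟨p₁, rfl⟩
  | Dir.r :: p₁ =>
    refine absurd (clt_C_right j e f) (hbelow (q ++ [Dir.r]) f ⟨_, rfl⟩ ⟨p₁, by simp⟩ ?_)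
    rw [occAt_append hq]; simp [occAt]

theorem not_clt_of_occAt_left {p₁ q₁ : List Dir} {z : CT}
    (h : PassesThrough a (q ++ Dir.l :: p₁) q j e f) (hq₁ : q₁ <+: p₁)
    (hz : occAt e q₁ = some z) : ¬ clt z (CT.C j e f) := by
  refine h.2.2.2 (q ++ Dir.l :: q₁) z ⟨_, rfl⟩ ?_ ?_
  · obtain ⟨s, rfl⟩ := hq₁
    exact ⟨s, by simp⟩
  · rwa [occAt_append h.2.2.1 (Dir.l :: q₁)]

theorem trans_left {p₁ q₁ : List Dir} {k : ℕ} {g h : CT}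
    (hout : PassesThrough a (q ++ Dir.l :: p₁) q j e f)
    (hin : PassesThrough e p₁ q₁ k g h) :
    PassesThrough a (q ++ Dir.l :: p₁) (q ++ Dir.l :: q₁) k g h := by
  obtain ⟨⟨s, rfl⟩, hne, hq₁, hbelow⟩ := hin
  have hq := hout.2.2.1
  refine ⟨⟨s, by simp⟩, fun heq => hne (by simpa using heq), ?_, ?_⟩
  · rwa [occAt_append hq (Dir.l :: q₁)]
  · rintro r z ⟨t, rfl⟩ ⟨u, hu⟩ hz
    rw [List.append_assoc, List.cons_append, occAt_append hq] at hz
    refine hbelow (q₁ ++ t) z ⟨t, rfl⟩ ⟨u, ?_⟩ hz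
    simpa using hu

end PassesThrough

theorem exists_passesThrough_lt {a x e f : CT} {i : ℕ} {p q : List Dir}
    (hax : clt a x) (hx : occAt a p = some x)
    (hpass : PassesThrough a p q i e f) (hea : clt e a) (hstd : Std true (CT.C i e f)) :
    ∃ q' j e' f', PassesThrough a p q' j e' f' ∧ j < i := by
  obtain ⟨p₁, hp⟩ := hpass.exists_eq_append_left
  rw [hp] at hx hpass ⊢
  have hx₁ : occAt e p₁ = some x := by rwa [occAt_append hpass.2.2.1 (Dir.l :: p₁)] at hx
  obtain ⟨hse, -, -, hbfb⟩ := hstd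
  rcases hbfb p₁ x hx₁ (clt_trans _ _ _ hea hax) with
    ⟨q₁, z, hq₁, hz, hzlt⟩ | ⟨q₁, k, g, h, hq₁, hne, hocc, hcond, hbelow⟩
  · exact absurd hzlt (hpass.not_clt_of_occAt_left hq₁ hz)
  · have hin : PassesThrough e p₁ q₁ k g h := ⟨hq₁, hne, hocc, hbelow⟩
    have hdeep := hpass.trans_left hin
    rcases hcond with hki | ⟨-, rfl, hge⟩
    · exact ⟨_, k, g, h, hdeep, hki⟩
    · exact exists_passesThrough_lt hax hx hdeep (clt_trans _ _ _ hge hea)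
        (hse.of_occAt hocc)
termination_by p.length - q.length
decreasing_by
  have := hq₁.length_le
  simp only [hp, List.length_append, List.length_cons]
  omega

theorem BFB.of_false {ext : Bool} {i : ℕ} {a b : CT} (h : BFB false i a b) : BFB ext i a b :=
  fun p x hx hax => (h p x hx hax).imp id fun ⟨q, j, e, f, hq, hne, hocc, hcond, hbelow⟩ =>
    ⟨q, j, e, f, hq, hne, hocc, hcond.imp_right (absurd ·.1 (by simp)), hbelow⟩

theorem BFB.of_true {i : ℕ} {a b : CT} (hsa : Std true a) (h : BFB true i a b) :
    BFB false i a b := by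
  intro p x hx hax
  refine (h p x hx hax).imp id ?_
  rintro ⟨q, j, e, f, hq, hne, hocc, hji | ⟨-, rfl, hea⟩, hbelow⟩
  · exact ⟨q, j, e, f, hq, hne, hocc, Or.inl hji, hbelow⟩
  · obtain ⟨q', j', e', f', ⟨hq', hne', hocc', hbelow'⟩, hj'⟩ :=
      exists_passesThrough_lt hax hx ⟨hq, hne, hocc, hbelow⟩ hea (hsa.of_occAt hocc)
    exact ⟨q', j', e', f', hq', hne', hocc', Or.inl hj', hbelow'⟩

/-- A term is standard under the extended passthrough definition iff it is standard
under the original definition; consequently (under the identification of `C_i(a,b)`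
with `C(Ω·i + a, b)`) the `C_i` system permits exactly the same terms below `Ω`, with
the same comparison `clt`, as the Degrees of Reflection with Passthrough system using
pairing for the notation `O` above `Ω`. -/
theorem std_ext_iff_std :
    ∀ t : CT, Std true t ↔ Std false t := by
  intro t
  induction t with
  | zero => exact Iff.rfl
  | C i a b iha ihb =>
    constructor
    · rintro ⟨hsa, hsb, hb, hbfb⟩
      exact ⟨iha.mp hsa, ihb.mp hsb, hb, hbfb.of_true hsa⟩
    · rintro ⟨hsa, hsb, hb, hbfb⟩
      exact ⟨iha.mpr hsa, ihb.mpr hsb, hb, hbfb.of_false⟩
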